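/- Let (W, S) be a Coxeter system, J, K ⊆ S, and δ : W_J → W_K a group isomorphism with δ(J) = K. If w ∈ ᴶW, w' ∈ W, and w ⪯ w' (i.e. there exists u ∈ W_J with u⁻¹ w δ(u) ≤ w'), then ℓ(w) ≤ ℓ(w'). -/

import Mathlib

open CoxeterSystem

variable {B W : Type*} [Group W] {M : CoxeterMatrix B}

/-- The strong Bruhat order on a Coxeter group: the reflexive-transitive closure of the
relation relating `a` to `a * t` where `t` is a reflection and the length increases. -/
def bruhatLE (cs : CoxeterSystem M W) (u v : W) : Prop :=
  Relation.ReflTransGen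
    (fun a b => ∃ t : W, cs.IsReflection t ∧ b = a * t ∧ cs.length a < cs.length b) u v

/-- `ᴶW`: the set of `w` with `ℓ(s w) > ℓ(w)` for all `s ∈ J`, i.e. the minimal length
representatives of the cosets `W_J \ W`. Here `J` is a set of simple reflections of `W`. -/
def minLeft (cs : CoxeterSystem M W) (J : Set W) : Set W :=
  {w | ∀ s ∈ J, cs.length w < cs.length (s * w)}

/-- `Wᴶ`: the set of `w` with `ℓ(w s) > ℓ(w)` for all `s ∈ J`, i.e. the minimal length
representatives of the cosets `W / W_J`. -/
def minRight (cs : CoxeterSystem M W) (J : Set W) : Set W :=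
  {w | ∀ s ∈ J, cs.length w < cs.length (w * s)}

/-- `δ` is a group isomorphism from `W_J` onto `W_K` satisfying `δ(J) = K`, encoded as a
function `W → W` restricting to a multiplicative bijection of the subgroup generated by `J`
onto the subgroup generated by `K`, and mapping the set `J` onto the set `K`. -/
structure IsParabolicIso (J K : Set W) (δ : W → W) : Prop where
  bijOn : Set.BijOn δ (Subgroup.closure J : Set W) (Subgroup.closure K : Set W)
  map_mul : ∀ u ∈ Subgroup.closure J, ∀ v ∈ Subgroup.closure J, δ (u * v) = δ u * δ v
  image_eq : δ '' J = K

/-- The relation `w ⪯ w'`: there exists `u ∈ W_J` with `u⁻¹ * w * δ(u) ≤ w'` in Bruhat order. -/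
def specLE (cs : CoxeterSystem M W) (J : Set W) (δ : W → W) (w w' : W) : Prop :=
  ∃ u ∈ Subgroup.closure J, bruhatLE cs (u⁻¹ * w * δ u) w'

/-!
Since `w ∈ ᴶW` has minimal length in its coset `W_J w`, lengths add: `ℓ(u⁻¹ w) = ℓ(u) + ℓ(w)`
for `u ∈ W_J`. As `δ` sends the simple reflections in `J` to simple reflections,
`ℓ(δ u) ≤ ℓ(u)`, hence `ℓ(u⁻¹ w δ(u)) ≥ ℓ(u⁻¹ w) - ℓ(δ u) ≥ ℓ(w)`, and the Bruhat order only
increases length.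

Length additivity rests on the exchange condition, proved by Tits' parity argument: `s i` acts
on `W × ZMod 2` by `(t, ε) ↦ (s i * t * s i, ε + [t = s i])`. These involutions satisfy the
Coxeter relations, and `π ω` sends `(t, 0)` to `(π ω * t * (π ω)⁻¹, ν(π ω, t))` where
`ν(π ω, t)` is the parity of the number of occurrences of `t` in the right inversion sequence
of `ω`. If `ℓ(w t) < ℓ(w)` but `ν(w, t) = 0`, then `ν(w t, t) = ν(w, t) + 1 = 1`, so `t` occurs
in the inversion sequence of a reduced word for `w t` and is a right inversion of `w t`, which is
absurd. Hence every right inversion of `π ω` occurs in the inversion sequence of `ω`.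
-/

namespace CoxeterSystem

variable (cs : CoxeterSystem M W)

local prefix:100 "s" => cs.simple
local prefix:100 "π" => cs.wordProd
local prefix:100 "ℓ" => cs.length
local prefix:100 "ris" => cs.rightInvSeq

theorem simple_mul_pow_mul_simple (i j : B) (k : ℕ) :
    s j * (s i * s j) ^ k * s j = (s i * s j)⁻¹ ^ k := by
  have h : s j * (s i * s j) * (s j)⁻¹ = (s i * s j)⁻¹ := by simp [mul_assoc]
  rw [← h, conj_pow, inv_simple]

theorem simple_mul_mul_simple_eq_iff (i : B) (t x : W) :
    s i * t * s i = x ↔ t = s i * x * s i := by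
  constructor <;> rintro rfl <;> simp [mul_assoc]

theorem conj_pow_simple_mul_simple_eq_iff (i j : B) (k r : ℕ) (t : W) :
    (s i * s j) ^ k * t * ((s i * s j) ^ k)⁻¹ = (s i * s j)⁻¹ ^ r * s j ↔
      t = (s i * s j)⁻¹ ^ (2 * k + r) * s j := by
  have h : s j * (s i * s j) ^ k = (s i * s j)⁻¹ ^ k * s j := by
    rw [← simple_mul_pow_mul_simple, simple_mul_simple_cancel_right]
  have e : ((s i * s j) ^ k)⁻¹ * ((s i * s j)⁻¹ ^ r * ((s i * s j)⁻¹ ^ k * s j)) =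
      (s i * s j)⁻¹ ^ (2 * k + r) * s j := by
    rw [← inv_pow]
    group
  rw [mul_inv_eq_iff_eq_mul, mul_assoc, ← eq_inv_mul_iff_mul_eq, h, e]

section ReflectionParity

variable [DecidableEq W]

def reflParityPerm (i : B) : Equiv.Perm (W × ZMod 2) :=
  Function.Involutive.toPerm (fun p => (s i * p.1 * s i, p.2 + if p.1 = s i then 1 else 0)) <| by
    rintro ⟨t, ε⟩
    have hconj : s i * (s i * t * s i) * s i = t := by simp [mul_assoc]
    have hfix : s i * t * s i = s i ↔ t = s i := by
      rw [simple_mul_mul_simple_eq_iff, simple_mul_simple_cancel_right]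
    simp only [hconj, hfix, Prod.mk.injEq, true_and]
    split_ifs <;> simp [add_assoc, CharTwo.add_self_eq_zero]

@[simp] theorem reflParityPerm_apply (i : B) (t : W) (ε : ZMod 2) :
    cs.reflParityPerm i (t, ε) = (s i * t * s i, ε + if t = s i then 1 else 0) := rfl

theorem reflParityPerm_mul_pow_apply (i j : B) (k : ℕ) (t : W) (ε : ZMod 2) :
    ((cs.reflParityPerm i * cs.reflParityPerm j) ^ k) (t, ε) =
      ((s i * s j) ^ k * t * ((s i * s j) ^ k)⁻¹,
        ε + ∑ r ∈ Finset.range (2 * k), if t = (s i * s j)⁻¹ ^ r * s j then 1 else 0) := by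
  induction k with
  | zero => simp
  | succ k ih =>
    set p := s i * s j
    have hj : p ^ k * t * (p ^ k)⁻¹ = s j ↔ t = p⁻¹ ^ (2 * k) * s j := by
      have h := cs.conj_pow_simple_mul_simple_eq_iff i j k 0 t
      rwa [pow_zero, one_mul, add_zero] at h
    have hi : s j * (p ^ k * t * (p ^ k)⁻¹) * s j = s i ↔ t = p⁻¹ ^ (2 * k + 1) * s j := by
      rw [simple_mul_mul_simple_eq_iff, ← conj_pow_simple_mul_simple_eq_iff]
      simp [p, mul_assoc]
    rw [pow_succ', Equiv.Perm.mul_apply, ih, Equiv.Perm.mul_apply]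
    simp only [reflParityPerm_apply, hj, hi, Prod.mk.injEq]
    rw [mul_add_one, Finset.sum_range_succ, Finset.sum_range_succ]
    constructor
    · simp only [p, pow_succ', mul_inv_rev, inv_simple]
      group
    · ring

theorem isLiftable_reflParityPerm : M.IsLiftable cs.reflParityPerm := by
  intro i j
  ext ⟨t, ε⟩
  · simp [reflParityPerm_mul_pow_apply, simple_mul_simple_pow]
  · -- the sequence `(s i * s j)⁻¹ ^ r * s j` has period `M i j`, so every term is counted twice
    have hperiod : ∀ r, (s i * s j)⁻¹ ^ (M i j + r) = (s i * s j)⁻¹ ^ r := by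
      simp [pow_add]
    simp only [reflParityPerm_mul_pow_apply, Equiv.Perm.one_apply, two_mul,
      Finset.sum_range_add, hperiod, CharTwo.add_self_eq_zero, add_zero]

def reflParityRep : W →* Equiv.Perm (W × ZMod 2) :=
  cs.lift ⟨cs.reflParityPerm, cs.isLiftable_reflParityPerm⟩

theorem reflParityRep_simple (i : B) : cs.reflParityRep (s i) = cs.reflParityPerm i :=
  cs.lift_apply_simple _ i

theorem reflParityRep_wordProd (ω : List B) (t : W) (ε : ZMod 2) :
    cs.reflParityRep (π ω) (t, ε) = (π ω * t * (π ω)⁻¹, ε + (ris ω).count t) := by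
  induction ω generalizing ε with
  | nil => simp
  | cons i ω ih =>
    have hris : ris (i :: ω) = ((π ω)⁻¹ * s i * π ω) :: ris ω := rfl
    have hcond : π ω * t * (π ω)⁻¹ = s i ↔ (π ω)⁻¹ * s i * π ω = t := by
      constructor <;> intro h <;> rw [← h] <;> group
    rw [wordProd_cons, map_mul, Equiv.Perm.mul_apply, ih, reflParityRep_simple,
      reflParityPerm_apply, hris, List.count_cons]
    simp only [hcond, beq_iff_eq, Prod.mk.injEq, mul_inv_rev, inv_simple]
    constructor
    · group
    · split_ifs <;> push_cast <;> ring

def reflParity (w t : W) : ZMod 2 := (cs.reflParityRep w (t, 0)).2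

theorem reflParity_wordProd (ω : List B) (t : W) :
    cs.reflParity (π ω) t = (ris ω).count t := by
  simp [reflParity, reflParityRep_wordProd]

theorem reflParityRep_apply (w t : W) (ε : ZMod 2) :
    cs.reflParityRep w (t, ε) = (w * t * w⁻¹, ε + cs.reflParity w t) := by
  obtain ⟨ω, -, rfl⟩ := cs.exists_isReduced w
  rw [reflParityRep_wordProd, reflParity_wordProd]

theorem reflParity_mul (x y t : W) :
    cs.reflParity (x * y) t = cs.reflParity y t + cs.reflParity x (y * t * y⁻¹) := by
  rw [reflParity, map_mul, Equiv.Perm.mul_apply, cs.reflParityRep_apply y,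
    cs.reflParityRep_apply x, zero_add]

theorem reflParity_self {t : W} (ht : cs.IsReflection t) : cs.reflParity t t = 1 := by
  obtain ⟨v, i, rfl⟩ := ht
  have hconj : v⁻¹ * (v * s i * v⁻¹) * v⁻¹⁻¹ = s i := by group
  have hsimple : cs.reflParity (s i) (s i) = 1 := by simp [reflParity, reflParityRep_simple]
  have hcancel : cs.reflParity v⁻¹ (v * s i * v⁻¹) + cs.reflParity v (s i) = 0 := by
    have h := cs.reflParity_mul v v⁻¹ (v * s i * v⁻¹)
    rw [mul_inv_cancel, hconj] at h
    rw [← h]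
    simp [reflParity]
  rw [cs.reflParity_mul (v * s i), cs.reflParity_mul v, hconj, inv_simple,
    simple_mul_simple_cancel_right, hsimple, ← add_assoc, add_right_comm, hcancel, zero_add]

theorem reflParity_mul_self {t : W} (ht : cs.IsReflection t) (w : W) :
    cs.reflParity (w * t) t = cs.reflParity w t + 1 := by
  rw [reflParity_mul, cs.reflParity_self ht, ht.mul_self, one_mul, ht.inv, add_comm]

theorem mem_rightInvSeq_of_reflParity_ne_zero {ω : List B} {t : W}
    (h : cs.reflParity (π ω) t ≠ 0) : t ∈ ris ω := by
  contrapose! h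
  rw [reflParity_wordProd, List.count_eq_zero_of_not_mem h, Nat.cast_zero]

theorem reflParity_eq_one_of_isRightInversion {w t : W} (h : cs.IsRightInversion w t) :
    cs.reflParity w t = 1 := by
  by_contra hne
  obtain ⟨ω, hω, hwt⟩ := cs.exists_isReduced (w * t)
  have hmem : t ∈ ris ω := by
    apply cs.mem_rightInvSeq_of_reflParity_ne_zero
    rwa [← hwt, cs.reflParity_mul_self h.1, Ne, add_eq_zero_iff_eq_neg, CharTwo.neg_eq]
  have hlt := (cs.isRightInversion_of_mem_rightInvSeq hω hmem).2
  rw [← hwt, mul_assoc, h.1.mul_self, mul_one] at hlt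
  exact absurd h.2 hlt.not_gt

end ReflectionParity

theorem mem_rightInvSeq_of_isRightInversion {ω : List B} {t : W}
    (ht : cs.IsRightInversion (π ω) t) : t ∈ ris ω := by
  classical
  apply cs.mem_rightInvSeq_of_reflParity_ne_zero
  rw [cs.reflParity_eq_one_of_isRightInversion ht]
  exact one_ne_zero

theorem exists_eraseIdx_of_isRightInversion {ω : List B} {t : W}
    (ht : cs.IsRightInversion (π ω) t) : ∃ j < ω.length, π ω * t = π (ω.eraseIdx j) := by
  obtain ⟨j, hj, rfl⟩ := List.mem_iff_getElem.mp (cs.mem_rightInvSeq_of_isRightInversion ht)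
  rw [length_rightInvSeq] at hj
  exact ⟨j, hj, by rw [← List.getD_eq_getElem _ 1, wordProd_mul_getD_rightInvSeq]⟩

theorem exists_eraseIdx_of_isLeftInversion {ω : List B} {t : W}
    (ht : cs.IsLeftInversion (π ω) t) : ∃ j < ω.length, t * π ω = π (ω.eraseIdx j) := by
  have hmem : t ∈ cs.leftInvSeq ω := by
    have h := cs.mem_rightInvSeq_of_isRightInversion (ω := ω.reverse)
      (by rwa [wordProd_reverse, isRightInversion_inv_iff])
    rwa [rightInvSeq_reverse, List.mem_reverse] at h
  obtain ⟨j, hj, rfl⟩ := List.mem_iff_getElem.mp hmem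
  rw [length_leftInvSeq] at hj
  exact ⟨j, hj, by rw [← List.getD_eq_getElem _ 1, getD_leftInvSeq_mul_wordProd]⟩

theorem exists_reduced_sublist (ω : List B) :
    ∃ ω', ω'.Sublist ω ∧ cs.IsReduced ω' ∧ π ω' = π ω := by
  induction ω using List.reverseRecOn with
  | nil => exact ⟨[], .refl _, by simp [IsReduced], rfl⟩
  | append_singleton ω i ih =>
    obtain ⟨ω', hsub, hred, hprod⟩ := ih
    have hsub' : ω'.Sublist (ω ++ [i]) := hsub.trans (List.sublist_append_left ω [i])
    have hprod' : π (ω ++ [i]) = π ω' * s i := by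
      rw [wordProd_append, hprod, wordProd_singleton]
    by_cases hdesc : cs.IsRightDescent (π ω') i
    · obtain ⟨j, hj, hdel⟩ := cs.exists_eraseIdx_of_isRightInversion
        ((cs.isRightInversion_simple_iff_isRightDescent _ i).mpr hdesc)
      refine ⟨ω'.eraseIdx j, (List.eraseIdx_sublist ω' j).trans hsub', ?_,
        by rw [← hdel, hprod']⟩
      have hlen := cs.isRightDescent_iff.mp hdesc
      rw [IsReduced, ← hdel, List.length_eraseIdx_of_lt hj]
      rw [IsReduced] at hred
      omega
    · refine ⟨ω' ++ [i], hsub.append_right [i], ?_,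
        by rw [hprod', wordProd_append, wordProd_singleton]⟩
      have hlen := cs.not_isRightDescent_iff.mp hdesc
      rw [IsReduced, wordProd_append, wordProd_singleton, hlen, hred, List.length_append,
        List.length_singleton]

section Parabolic

variable {cs} {J : Set W}

theorem wordProd_mem_closure {ω : List B} (hω : ∀ i ∈ ω, s i ∈ J) :
    π ω ∈ Subgroup.closure J :=
  Subgroup.list_prod_mem _ <| by simpa using fun i hi => Subgroup.subset_closure (hω i hi)

theorem exists_wordProd_eq_of_mem_closure (hJ : J ⊆ Set.range cs.simple) {u : W}
    (hu : u ∈ Subgroup.closure J) : ∃ ω : List B, (∀ i ∈ ω, s i ∈ J) ∧ π ω = u := by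
  induction hu using Subgroup.closure_induction with
  | mem x hx =>
    obtain ⟨i, rfl⟩ := hJ hx
    exact ⟨[i], by simpa using hx, cs.wordProd_singleton i⟩
  | one => exact ⟨[], by simp, cs.wordProd_nil⟩
  | mul x y _ _ ihx ihy =>
    obtain ⟨ωx, hωx, rfl⟩ := ihx
    obtain ⟨ωy, hωy, rfl⟩ := ihy
    exact ⟨ωx ++ ωy, List.forall_mem_append.mpr ⟨hωx, hωy⟩, cs.wordProd_append ωx ωy⟩
  | inv x _ ih =>
    obtain ⟨ω, hω, rfl⟩ := ih
    exact ⟨ω.reverse, by simpa using hω, cs.wordProd_reverse ω⟩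

theorem exists_reduced_wordProd_eq_of_mem_closure (hJ : J ⊆ Set.range cs.simple) {u : W}
    (hu : u ∈ Subgroup.closure J) :
    ∃ ω : List B, (∀ i ∈ ω, s i ∈ J) ∧ cs.IsReduced ω ∧ π ω = u := by
  obtain ⟨ω, hωJ, rfl⟩ := exists_wordProd_eq_of_mem_closure hJ hu
  obtain ⟨ω', hsub, hred, hprod⟩ := cs.exists_reduced_sublist ω
  exact ⟨ω', fun i hi => hωJ i (hsub.subset hi), hred, hprod⟩

theorem exists_eraseIdx_of_isLeftInversion_append {ω₁ ω₂ : List B} {t : W}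
    (ht : cs.IsLeftInversion (π (ω₁ ++ ω₂)) t) :
    (∃ j < ω₁.length, t * π ω₁ = π (ω₁.eraseIdx j)) ∨
      ∃ j < ω₂.length, t * π ω₁ * π ω₂ = π ω₁ * π (ω₂.eraseIdx j) := by
  obtain ⟨k, hk, hdel⟩ := cs.exists_eraseIdx_of_isLeftInversion ht
  rw [List.length_append] at hk
  rcases lt_or_ge k ω₁.length with hk₁ | hk₁
  · rw [List.eraseIdx_append_of_lt_length hk₁, wordProd_append, wordProd_append, ← mul_assoc]
      at hdel
    exact Or.inl ⟨k, hk₁, mul_right_cancel hdel⟩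
  · rw [List.eraseIdx_append_of_length_le hk₁, wordProd_append, wordProd_append, ← mul_assoc]
      at hdel
    exact Or.inr ⟨k - ω₁.length, by omega, hdel⟩

theorem length_wordProd_mul_of_forall_length_le {w : W}
    (hw : ∀ v ∈ Subgroup.closure J, ℓ w ≤ ℓ (v * w)) {ω : List B} (hωJ : ∀ i ∈ ω, s i ∈ J)
    (hω : cs.IsReduced ω) : ℓ (π ω * w) = ω.length + ℓ w := by
  induction ω with
  | nil => simp
  | cons j ω ih =>
    have hωJ' : ∀ i ∈ ω, s i ∈ J := fun i hi => hωJ i (List.mem_cons_of_mem j hi)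
    have hω' : cs.IsReduced ω := by simpa using hω.drop 1
    replace ih := ih hωJ' hω'
    obtain ⟨σ, hσ, rfl⟩ := cs.exists_isReduced w
    rw [wordProd_cons, mul_assoc, List.length_cons]
    rcases cs.length_simple_mul (π ω * π σ) j with hup | hdown
    · omega
    exfalso
    have hinv : cs.IsLeftInversion (π (ω ++ σ)) (s j) :=
      ⟨cs.isReflection_simple j, by rw [wordProd_append]; omega⟩
    rcases exists_eraseIdx_of_isLeftInversion_append hinv with ⟨k, hk, hdel⟩ | ⟨k, hk, hdel⟩
    · have hle := cs.length_wordProd_le (ω.eraseIdx k)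
      rw [← hdel, ← wordProd_cons, hω.eq, List.length_eraseIdx_of_lt hk, List.length_cons] at hle
      omega
    · -- `π (σ.eraseIdx k)` lies in the coset `W_J w` and is shorter than `w`
      have hconj : (π ω)⁻¹ * s j * π ω ∈ Subgroup.closure J :=
        mul_mem (mul_mem (inv_mem (wordProd_mem_closure hωJ'))
          (Subgroup.subset_closure (hωJ j List.mem_cons_self))) (wordProd_mem_closure hωJ')
      have hshorter := cs.length_wordProd_le (σ.eraseIdx k)
      have hmin := hw _ hconj
      rw [mul_assoc, mul_assoc, ← mul_assoc (s j), hdel, ← mul_assoc, inv_mul_cancel, one_mul]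
        at hmin
      rw [List.length_eraseIdx_of_lt hk] at hshorter
      rw [hσ.eq] at hmin
      omega

theorem length_le_length_mul_of_mem_minLeft (hJ : J ⊆ Set.range cs.simple) {w : W}
    (hw : w ∈ minLeft cs J) {v : W} (hv : v ∈ Subgroup.closure J) : ℓ w ≤ ℓ (v * w) := by
  obtain ⟨v₀, hv₀, hv₀min⟩ :=
    (InvImage.wf (fun v => ℓ (v * w)) wellFounded_lt).has_min (Subgroup.closure J : Set W)
      ⟨1, one_mem _⟩
  have hmin : ∀ v ∈ Subgroup.closure J, ℓ (v₀ * w) ≤ ℓ (v * (v₀ * w)) := fun v hv => by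
    simpa [InvImage, mul_assoc] using hv₀min (v * v₀) (mul_mem hv hv₀)
  obtain ⟨ω, hωJ, hω, hωv₀⟩ := exists_reduced_wordProd_eq_of_mem_closure hJ (inv_mem hv₀)
  have hw_eq : w = π ω * (v₀ * w) := by rw [hωv₀, inv_mul_cancel_left]
  cases ω with
  | nil =>
    rw [wordProd_nil, one_mul] at hw_eq
    rw [hw_eq]
    exact hmin v hv
  | cons j ω =>
    exfalso
    have hωJ' : ∀ i ∈ ω, s i ∈ J := fun i hi => hωJ i (List.mem_cons_of_mem j hi)
    have hlong := length_wordProd_mul_of_forall_length_le hmin hωJ hω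
    have hshort := length_wordProd_mul_of_forall_length_le hmin hωJ' (by simpa using hω.drop 1)
    rw [← hw_eq, List.length_cons] at hlong
    rw [← cs.simple_mul_simple_cancel_left (w := π ω) j, ← wordProd_cons, mul_assoc, ← hw_eq]
      at hshort
    have := hw (s j) (hωJ j List.mem_cons_self)
    omega

theorem length_mul_of_mem_minLeft (hJ : J ⊆ Set.range cs.simple) {w : W}
    (hw : w ∈ minLeft cs J) {u : W} (hu : u ∈ Subgroup.closure J) :
    ℓ (u * w) = ℓ u + ℓ w := by
  obtain ⟨ω, hωJ, hω, rfl⟩ := exists_reduced_wordProd_eq_of_mem_closure hJ hu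
  rw [length_wordProd_mul_of_forall_length_le
    (fun v hv => length_le_length_mul_of_mem_minLeft hJ hw hv) hωJ hω, hω.eq]

end Parabolic

end CoxeterSystem

namespace IsParabolicIso

variable {cs : CoxeterSystem M W} {J K : Set W} {δ : W → W}

theorem map_one (hδ : IsParabolicIso J K δ) : δ 1 = 1 := by
  have h := hδ.map_mul 1 (one_mem _) 1 (one_mem _)
  rwa [one_mul, left_eq_mul] at h

theorem length_map_wordProd_le (hK : K ⊆ Set.range cs.simple) (hδ : IsParabolicIso J K δ)
    {ω : List B} (hω : ∀ i ∈ ω, cs.simple i ∈ J) : cs.length (δ (cs.wordProd ω)) ≤ ω.length := by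
  induction ω with
  | nil => simp [hδ.map_one]
  | cons i ω ih =>
    have hi : cs.simple i ∈ J := hω i List.mem_cons_self
    have hω' : ∀ j ∈ ω, cs.simple j ∈ J := fun j hj => hω j (List.mem_cons_of_mem i hj)
    obtain ⟨k, hk⟩ := hK (hδ.image_eq ▸ Set.mem_image_of_mem δ hi)
    rw [wordProd_cons, hδ.map_mul _ (Subgroup.subset_closure hi) _ (wordProd_mem_closure hω'),
      ← hk, List.length_cons]
    have hle := ih hω'
    calc cs.length (cs.simple k * δ (cs.wordProd ω))
        ≤ cs.length (cs.simple k) + cs.length (δ (cs.wordProd ω)) := cs.length_mul_le _ _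
      _ ≤ ω.length + 1 := by rw [length_simple]; omega

theorem length_map_le (hJ : J ⊆ Set.range cs.simple) (hK : K ⊆ Set.range cs.simple)
    (hδ : IsParabolicIso J K δ) {u : W} (hu : u ∈ Subgroup.closure J) :
    cs.length (δ u) ≤ cs.length u := by
  obtain ⟨ω, hωJ, hω, rfl⟩ := exists_reduced_wordProd_eq_of_mem_closure hJ hu
  exact hω.eq ▸ hδ.length_map_wordProd_le hK hωJ

end IsParabolicIso

theorem bruhatLE.length_le {cs : CoxeterSystem M W} {u v : W} (h : bruhatLE cs u v) :
    cs.length u ≤ cs.length v := by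
  induction h with
  | refl => exact le_rfl
  | tail _ hstep ih =>
    obtain ⟨t, -, rfl, hlt⟩ := hstep
    exact ih.trans hlt.le

/-- If `w ∈ ᴶW` and `w ⪯ w'`, then `ℓ(w) ≤ ℓ(w')`. -/
theorem length_le_of_specLE (cs : CoxeterSystem M W) (J K : Set W)
    (hJ : J ⊆ Set.range cs.simple) (hK : K ⊆ Set.range cs.simple)
    (δ : W → W) (hδ : IsParabolicIso J K δ)
    (w w' : W) (hw : w ∈ minLeft cs J) (h : specLE cs J δ w w') :
    cs.length w ≤ cs.length w' := by
  obtain ⟨u, hu, hle⟩ := h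
  refine Nat.le_of_add_le_add_left (a := cs.length u) ?_
  calc cs.length u + cs.length w
      = cs.length (u⁻¹ * w) := by rw [length_mul_of_mem_minLeft hJ hw (inv_mem hu), length_inv]
    _ ≤ cs.length (u⁻¹ * w * δ u) + cs.length (δ u) := cs.length_le_length_mul_add_right _ _
    _ ≤ cs.length w' + cs.length u := add_le_add hle.length_le (hδ.length_map_le hJ hK hu)
    _ = cs.length u + cs.length w' := add_comm _ _
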